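/- arXiv:1907.12857 — 2 statements merged into one kernel-verified Lean document; each statement's English description precedes it below -/
import Mathlib

section
/- In any graph of maximum degree at most D ≥ 2, the number of subtrees of size u (connected subgraphs on u vertices that contain a fixed vertex v) is less than (eD)^u. -/
set_option linter.unusedSectionVars false
namespace Stmt3

variable {V : Type} [Fintype V] [DecidableEq V] (G : SimpleGraph V) [DecidableRel G.Adj]
  (e : V → ℕ) (D : ℕ) (v : V)

/-- rank of `c` among neighbors of `x`. -/
def rnk (x c : V) : ℕ := ((G.neighborFinset x).filter (fun w => e w < e c)).card

noncomputable def unrank (x : V) (r : ℕ) : V :=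
  if h : ∃ c, G.Adj x c ∧ rnk G e x c = r then h.choose else v

noncomputable def step (l : List V) (k : ℕ) : List V :=
  l ++ [unrank G e v (l.getD (k / D) v) (k % D)]

noncomputable def build (ks : List ℕ) : List V := ks.foldl (step G e D v) [v]

lemma build_append (ks : List ℕ) (k : ℕ) :
    build G e D v (ks ++ [k]) = step G e D v (build G e D v ks) k := by
  simp [build, List.foldl_append]

lemma rnk_lt_of_adj {x c : V} (hx : (G.neighborFinset x).card ≤ D) (h : G.Adj x c) :
    rnk G e x c < D := by
  refine lt_of_lt_of_le ?_ hx
  apply Finset.card_lt_card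
  rw [Finset.ssubset_iff_of_subset (Finset.filter_subset _ _)]
  exact ⟨c, by simpa using h, by simp⟩

lemma rnk_injOn (he : Function.Injective e) {x c c' : V} (h : G.Adj x c) (h' : G.Adj x c')
    (hr : rnk G e x c = rnk G e x c') : c = c' := by
  rcases lt_trichotomy (e c) (e c') with hlt | heq | hlt
  · exfalso
    have hss : (G.neighborFinset x).filter (fun w => e w < e c) ⊂
        (G.neighborFinset x).filter (fun w => e w < e c') :=
      (Finset.ssubset_iff_of_subset (Finset.monotone_filter_right _
          (fun w _ hw => lt_trans hw hlt))).2 ⟨c, by simpa using ⟨h, hlt⟩, by simp⟩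
    exact absurd hr (Nat.ne_of_lt (Finset.card_lt_card hss))
  · exact he heq
  · exfalso
    have hss : (G.neighborFinset x).filter (fun w => e w < e c') ⊂
        (G.neighborFinset x).filter (fun w => e w < e c) :=
      (Finset.ssubset_iff_of_subset (Finset.monotone_filter_right _
          (fun w _ hw => lt_trans hw hlt))).2 ⟨c', by simpa using ⟨h', hlt⟩, by simp⟩
    exact absurd hr.symm (Nat.ne_of_lt (Finset.card_lt_card hss))

lemma unrank_rnk (he : Function.Injective e) {x c : V} (h : G.Adj x c) :
    unrank G e v x (rnk G e x c) = c := by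
  rw [unrank]
  have hx : ∃ c', G.Adj x c' ∧ rnk G e x c' = rnk G e x c := ⟨c, h, rfl⟩
  rw [dif_pos hx]
  exact rnk_injOn G e he hx.choose_spec.1 h hx.choose_spec.2


variable (S : Finset V)

/-- candidates: vertices of `S` not yet listed, adjacent to a listed vertex. -/
def cand (l : List V) : Finset V :=
  (S \ l.toFinset).filter (fun c => ∃ x ∈ l, G.Adj x c)

noncomputable def keyOf (l : List V) (c : V) : ℕ :=
  l.findIdx (fun x => decide (G.Adj x c)) * D + rnk G e (l.getD (l.findIdx (fun x => decide (G.Adj x c))) v) c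

lemma mem_cand {l : List V} {c : V} :
    c ∈ cand G S l ↔ c ∈ S ∧ c ∉ l ∧ ∃ x ∈ l, G.Adj x c := by
  simp [cand, and_assoc]

lemma findIdx_lt {l : List V} {c : V} (h : ∃ x ∈ l, G.Adj x c) :
    l.findIdx (fun x => decide (G.Adj x c)) < l.length :=
  List.findIdx_lt_length_of_exists (by simpa using h)

lemma adj_parent {l : List V} {c : V} (h : ∃ x ∈ l, G.Adj x c) :
    G.Adj (l.getD (l.findIdx (fun x => decide (G.Adj x c))) v) c := by
  have hlt := findIdx_lt G h
  rw [List.getD_eq_getElem _ _ hlt]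
  have := List.findIdx_getElem (p := fun x => decide (G.Adj x c)) (xs := l) (w := hlt)
  simpa using this

lemma keyOf_lt (hdeg : ∀ x, (G.neighborFinset x).card ≤ D) {l : List V} {c : V}
    (h : ∃ x ∈ l, G.Adj x c) : keyOf G e D v l c < l.length * D := by
  have hj := findIdx_lt G h
  have hr := rnk_lt_of_adj G e D (hdeg _) (adj_parent G v h)
  calc keyOf G e D v l c < l.findIdx (fun x => decide (G.Adj x c)) * D + D := by
        exact Nat.add_lt_add_left hr _
    _ = (l.findIdx (fun x => decide (G.Adj x c)) + 1) * D := by ring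
    _ ≤ l.length * D := Nat.mul_le_mul_right _ hj

lemma kdiv {D : ℕ} (hD : 0 < D) {j r : ℕ} (hr : r < D) : (j * D + r) / D = j := by
  rw [mul_comm, Nat.mul_add_div hD, Nat.div_eq_of_lt hr, Nat.add_zero]

lemma kmod {D : ℕ} {j r : ℕ} (hr : r < D) : (j * D + r) % D = r := by
  rw [mul_comm, Nat.mul_add_mod, Nat.mod_eq_of_lt hr]

lemma keyOf_inj (he : Function.Injective e) (hdeg : ∀ x, (G.neighborFinset x).card ≤ D)
    {l : List V} {c c' : V} (h : ∃ x ∈ l, G.Adj x c) (h' : ∃ x ∈ l, G.Adj x c')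
    (hk : keyOf G e D v l c = keyOf G e D v l c') : c = c' := by
  have hr := rnk_lt_of_adj G e D (hdeg _) (adj_parent G v h)
  have hr' := rnk_lt_of_adj G e D (hdeg _) (adj_parent G v h')
  have hD : 0 < D := Nat.lt_of_le_of_lt (Nat.zero_le _) hr
  rw [keyOf, keyOf] at hk
  have hj : l.findIdx (fun x => decide (G.Adj x c)) = l.findIdx (fun x => decide (G.Adj x c')) := by
    have h1 := congrArg (· / D) hk
    simpa only [kdiv hD hr, kdiv hD hr'] using h1
  have hrr : rnk G e (l.getD (l.findIdx (fun x => decide (G.Adj x c))) v) c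
      = rnk G e (l.getD (l.findIdx (fun x => decide (G.Adj x c'))) v) c' := by
    have h1 := congrArg (· % D) hk
    simpa only [kmod hr, kmod hr'] using h1
  rw [← hj] at hrr
  have hadj' : G.Adj (l.getD (l.findIdx (fun x => decide (G.Adj x c))) v) c' := by
    rw [hj]; exact adj_parent G v h'
  exact rnk_injOn G e he (adj_parent G v h) hadj' hrr

lemma step_keyOf (he : Function.Injective e) (hdeg : ∀ x, (G.neighborFinset x).card ≤ D)
    {l : List V} {c : V} (h : ∃ x ∈ l, G.Adj x c) :
    step G e D v l (keyOf G e D v l c) = l ++ [c] := by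
  have hr := rnk_lt_of_adj G e D (hdeg _) (adj_parent G v h)
  have hD : 0 < D := lt_of_le_of_lt (Nat.zero_le _) hr
  rw [step, keyOf]
  rw [kdiv hD hr, kmod hr]
  rw [unrank_rnk G e v he (adj_parent G v h)]

lemma keyOf_stable {l : List V} {a c : V} (h : ∃ x ∈ l, G.Adj x c) :
    keyOf G e D v (l ++ [a]) c = keyOf G e D v l c := by
  have hj := findIdx_lt G h
  have hidx : (l ++ [a]).findIdx (fun x => decide (G.Adj x c))
      = l.findIdx (fun x => decide (G.Adj x c)) := by
    rw [List.findIdx_append, if_pos hj]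
  rw [keyOf, keyOf, hidx, List.getD_append _ _ _ _ hj]

lemma keyOf_ge_of_new {l : List V} {a c : V} (h : ∀ x ∈ l, ¬ G.Adj x c) :
    l.length * D ≤ keyOf G e D v (l ++ [a]) c := by
  have hidx : l.length ≤ (l ++ [a]).findIdx (fun x => decide (G.Adj x c)) := by
    rw [List.findIdx_append]
    have : l.findIdx (fun x => decide (G.Adj x c)) = l.length :=
      List.findIdx_eq_length_of_false (by simpa using h)
    rw [this]
    simp
  calc l.length * D ≤ (l ++ [a]).findIdx (fun x => decide (G.Adj x c)) * D :=
        Nat.mul_le_mul_right _ hidx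
    _ ≤ keyOf G e D v (l ++ [a]) c := Nat.le_add_right _ _


lemma exists_adj_walk {T : Set V} :
    ∀ {a b : ↑((S : Set V))} (_ : (G.induce (S : Set V)).Walk a b),
      (a : V) ∈ T → (b : V) ∉ T → ∃ c ∈ S, c ∉ T ∧ ∃ x ∈ T, G.Adj x c := by
  intro a b w
  induction w with
  | nil => intro h1 h2; exact absurd h1 h2
  | @cons p q r hadj w ih =>
    intro h1 h2
    by_cases hq : (q : V) ∈ T
    · exact ih hq h2
    · refine ⟨q, q.2, hq, p, h1, ?_⟩
      exact hadj

lemma exists_cand (hconn : (G.induce (S : Set V)).Connected) {l : List V}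
    (hvl : v ∈ l) (hvS : v ∈ S) (hsub : ∀ x ∈ l, x ∈ S) {b : V} (hb : b ∈ S) (hbl : b ∉ l) :
    (cand G S l).Nonempty := by
  have hreach := hconn.preconnected ⟨v, by exact_mod_cast hvS⟩ ⟨b, by exact_mod_cast hb⟩
  obtain ⟨w⟩ := hreach
  obtain ⟨c, hcS, hcl, x, hx, hadj⟩ :=
    exists_adj_walk G S (T := {y | y ∈ l}) w hvl hbl
  exact ⟨c, (mem_cand G S).2 ⟨hcS, hcl, x, hx, hadj⟩⟩

lemma main_induction (he : Function.Injective e)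
    (hdeg : ∀ x, (G.neighborFinset x).card ≤ D)
    (hvS : v ∈ S) (hconn : (G.induce (S : Set V)).Connected) :
    ∀ t : ℕ, t + 1 ≤ S.card → ∃ (ks : List ℕ) (xs : List V),
      build G e D v ks = xs ∧ ks.length = t ∧ xs.length = t + 1 ∧ xs.Nodup ∧
      (∀ x ∈ xs, x ∈ S) ∧ v ∈ xs ∧ List.Pairwise (· < ·) ks ∧
      (∀ k ∈ ks, k < xs.length * D) ∧
      (∀ c ∈ cand G S xs, ∀ k ∈ ks, k < keyOf G e D v xs c) := by
  intro t
  induction t with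
  | zero =>
    intro _
    exact ⟨[], [v], rfl, rfl, rfl, List.nodup_singleton v,
      by simpa using hvS, List.mem_singleton_self v, List.Pairwise.nil, by simp, by simp⟩
  | succ t ih =>
    intro hcard
    obtain ⟨ks, xs, hbuild, hkslen, hlen, hnodup, hsub, hvxs, hsort, hbd, hinv⟩ :=
      ih (le_trans (Nat.le_succ _) hcard)
    -- candidates nonempty
    have hxsfin : xs.toFinset.card = t + 1 := by
      rw [List.toFinset_card_of_nodup hnodup, hlen]
    have hlt : xs.toFinset.card < S.card := by omega
    have hsd : (S \ xs.toFinset).Nonempty := by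
      rw [Finset.sdiff_nonempty]
      intro hsub'
      have := Finset.card_le_card hsub'
      omega
    obtain ⟨b, hbmem⟩ := hsd
    obtain ⟨hbS, hbxs⟩ := Finset.mem_sdiff.1 hbmem
    have hne := exists_cand G v S hconn hvxs hvS hsub hbS (fun h => hbxs (List.mem_toFinset.2 h))
    obtain ⟨c₀, hc₀, hmin⟩ := Finset.exists_min_image (cand G S xs) (keyOf G e D v xs) hne
    obtain ⟨hc₀S, hc₀xs, hc₀adj⟩ := (mem_cand G S).1 hc₀
    set m := keyOf G e D v xs c₀ with hm
    have hmlt : m < xs.length * D := keyOf_lt G e D v hdeg hc₀adj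
    refine ⟨ks ++ [m], xs ++ [c₀], ?_, ?_, ?_, ?_, ?_, ?_, ?_, ?_, ?_⟩
    · rw [build_append, hbuild, step_keyOf G e D v he hdeg hc₀adj]
    · simp [hkslen]
    · simp [hlen]
    · simp only [List.nodup_append, List.nodup_singleton, List.disjoint_singleton]
      exact ⟨hnodup, by simp, fun a ha b hb hab => hc₀xs (by rw [List.mem_singleton.1 hb] at hab; exact hab ▸ ha)⟩
    · intro x hx
      rcases List.mem_append.1 hx with h | h
      · exact hsub x h
      · rw [List.mem_singleton.1 h]; exact hc₀S
    · exact List.mem_append.2 (Or.inl hvxs)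
    · rw [List.pairwise_append]
      exact ⟨hsort, List.pairwise_singleton _ _,
        fun k hk m' hm' => by rw [List.mem_singleton.1 hm']; exact hinv c₀ hc₀ k hk⟩
    · intro k hk
      rcases List.mem_append.1 hk with h | h
      · calc k < xs.length * D := hbd k h
          _ ≤ (xs ++ [c₀]).length * D := Nat.mul_le_mul_right _ (by simp)
      · rw [List.mem_singleton.1 h]
        calc m < xs.length * D := hmlt
          _ ≤ (xs ++ [c₀]).length * D := Nat.mul_le_mul_right _ (by simp)
    · intro c' hc' k hk
      obtain ⟨hc'S, hc'xs', hc'adj'⟩ := (mem_cand G S).1 hc'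
      have hklem : k ∈ ks ∨ k = m := by
        rcases List.mem_append.1 hk with h | h
        · exact Or.inl h
        · exact Or.inr (List.mem_singleton.1 h)
      by_cases hA : ∃ x ∈ xs, G.Adj x c'
      · have hc'xs : c' ∉ xs := fun h => hc'xs' (List.mem_append.2 (Or.inl h))
        have hc'cand : c' ∈ cand G S xs := (mem_cand G S).2 ⟨hc'S, hc'xs, hA⟩
        rw [keyOf_stable G e D v hA]
        rcases hklem with h | h
        · exact hinv c' hc'cand k h
        · subst h
          refine lt_of_le_of_ne (hmin c' hc'cand) ?_
          intro heq
          exact hc'xs' (by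
            rw [keyOf_inj G e D v he hdeg hc₀adj hA heq] at hc₀xs ⊢
            exact List.mem_append.2 (Or.inr (List.mem_singleton_self _)))
      · push_neg at hA
        have hge : xs.length * D ≤ keyOf G e D v (xs ++ [c₀]) c' :=
          keyOf_ge_of_new G e D v hA
        have hklt : k < xs.length * D := by
          rcases hklem with h | h
          · exact hbd k h
          · subst h; exact hmlt
        exact lt_of_lt_of_le hklt hge


noncomputable def decode (K : Finset ℕ) : Finset V :=
  (build G e D v (K.sort (· ≤ ·))).toFinset

lemma exists_encoding (he : Function.Injective e)
    (hdeg : ∀ x, (G.neighborFinset x).card ≤ D) {u : ℕ} (hu : 1 ≤ u)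
    (hvS : v ∈ S) (hcard : S.card = u) (hconn : (G.induce (S : Set V)).Connected) :
    ∃ K : Finset ℕ, K ∈ Finset.powersetCard (u - 1) (Finset.range (u * D)) ∧
      decode G e D v K = S := by
  obtain ⟨ks, xs, hbuild, hkslen, hlen, hnodup, hsub, _, hsort, hbd, _⟩ :=
    main_induction G e D v S he hdeg hvS hconn (u - 1) (by omega)
  have hxslen : xs.length = u := by omega
  have hksnodup : ks.Nodup := List.Pairwise.imp (fun h => ne_of_lt h) hsort
  have hsorted : ks.Pairwise (· ≤ ·) := List.Pairwise.imp (fun h => le_of_lt h) hsort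
  refine ⟨ks.toFinset, ?_, ?_⟩
  · rw [Finset.mem_powersetCard]
    constructor
    · intro k hk
      rw [List.mem_toFinset] at hk
      rw [Finset.mem_range]
      have := hbd k hk
      rwa [hxslen] at this
    · rw [List.toFinset_card_of_nodup hksnodup, hkslen]
  · rw [decode, (List.toFinset_sort (· ≤ ·) hksnodup).2 hsorted, hbuild]
    apply Finset.eq_of_subset_of_card_le
    · intro x hx
      exact hsub x (List.mem_toFinset.1 hx)
    · rw [List.toFinset_card_of_nodup hnodup, hxslen, hcard]

end Stmt3




/-- In a graph of maximum degree at most `D ≥ 2`, for a fixed vertex `v` and `u ≥ 1`,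
the number of `u`-vertex sets containing `v` inducing a connected subgraph is `< (eD)^u`. -/
theorem stmt_3 {V : Type} [Fintype V] [DecidableEq V] (G : SimpleGraph V)
    (D : ℕ) (hD : 2 ≤ D) (hdeg : ∀ w : V, (G.neighborSet w).ncard ≤ D)
    (v : V) (u : ℕ) (hu : 1 ≤ u) :
    (Nat.card {s : Finset V // v ∈ s ∧ s.card = u ∧ (G.induce (s : Set V)).Connected} : ℝ)
      < (Real.exp 1 * D) ^ u := by
  letI : DecidableRel G.Adj := Classical.decRel _
  obtain ⟨n, rfl⟩ : ∃ n, u = n + 1 := ⟨u - 1, by omega⟩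
  set e : V → ℕ := fun w => ((Fintype.equivFin V) w : ℕ) with he_def
  have he : Function.Injective e := fun a b h =>
    (Fintype.equivFin V).injective (Fin.val_injective h)
  have hdeg' : ∀ x, (G.neighborFinset x).card ≤ D := by
    intro x
    have h1 : (G.neighborFinset x).card = (G.neighborSet x).ncard := by
      rw [SimpleGraph.neighborFinset_def, Set.toFinset_card, ← Nat.card_eq_fintype_card,
        Nat.card_coe_set_eq]
    rw [h1]; exact hdeg x
  -- injection into subsets
  have key : ∀ s : {s : Finset V // v ∈ s ∧ s.card = n + 1 ∧ (G.induce (s : Set V)).Connected},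
      ∃ K, K ∈ Finset.powersetCard ((n+1) - 1) (Finset.range ((n+1) * D)) ∧
        Stmt3.decode G e D v K = s.1 := fun s =>
    Stmt3.exists_encoding G e D v s.1 he hdeg' (by omega) s.2.1 s.2.2.1 s.2.2.2
  choose F hF1 hF2 using key
  have hinj : Function.Injective (fun s => (⟨F s, hF1 s⟩ :
      {K // K ∈ Finset.powersetCard ((n+1) - 1) (Finset.range ((n+1) * D))})) := by
    intro a b hab
    apply Subtype.ext
    rw [← hF2 a, ← hF2 b]
    have : F a = F b := congrArg Subtype.val hab
    rw [this]
  have hcardle : Nat.card {s : Finset V // v ∈ s ∧ s.card = n + 1 ∧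
      (G.induce (s : Set V)).Connected} ≤ ((n+1) * D).choose n := by
    have h1 := Nat.card_le_card_of_injective _ hinj
    have h2 : Nat.card {K // K ∈ Finset.powersetCard ((n+1) - 1) (Finset.range ((n+1) * D))}
        = ((n+1) * D).choose n := by
      rw [Nat.card_eq_finsetCard, Finset.card_powersetCard, Finset.card_range, Nat.add_sub_cancel]
    omega
  -- real analysis
  have hfac : (0:ℝ) < ((Nat.factorial n) : ℝ) := by exact_mod_cast Nat.factorial_pos n
  have hchoose : (((n+1) * D).choose n : ℝ) ≤ (((n:ℝ)+1) * D) ^ n / (Nat.factorial n) := by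
    rw [le_div_iff₀ hfac]
    have h2 : (Nat.factorial n) * ((n+1) * D).choose n ≤ ((n+1) * D) ^ n := by
      rw [← Nat.descFactorial_eq_factorial_mul_choose]
      exact Nat.descFactorial_le_pow _ _
    calc (((n+1) * D).choose n : ℝ) * (Nat.factorial n) = (((Nat.factorial n) * ((n+1) * D).choose n : ℕ) : ℝ) := by
          push_cast; ring
      _ ≤ ((((n+1) * D) ^ n : ℕ) : ℝ) := by exact_mod_cast h2
      _ = (((n:ℝ)+1) * D) ^ n := by push_cast; ring
  have hexp : ((n:ℝ)+1) ^ n / (Nat.factorial n) ≤ Real.exp ((n:ℝ)+1) := by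
    have hterm : ((n:ℝ)+1) ^ (n+1) / Nat.factorial (n+1) ≤
        ∑ i ∈ Finset.range (n+2), ((n:ℝ)+1) ^ i / (Nat.factorial i) :=
      Finset.single_le_sum (f := fun i => ((n:ℝ)+1) ^ i / (Nat.factorial i))
        (fun i _ => by positivity) (Finset.mem_range.2 (by omega))
    have hsum := Real.sum_le_exp_of_nonneg (x := ((n:ℝ)+1)) (by positivity) (n+2)
    have heq : ((n:ℝ)+1) ^ (n+1) / (Nat.factorial (n+1) : ℝ) = ((n:ℝ)+1) ^ n / (Nat.factorial n) := by
      rw [pow_succ, Nat.factorial_succ]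
      push_cast
      rw [mul_comm ((n:ℝ)+1) ((Nat.factorial n) : ℝ), mul_div_mul_right _ _ (by positivity : ((n:ℝ)+1) ≠ 0)]
    rw [heq] at hterm
    exact le_trans hterm hsum
  have hD1 : (1:ℝ) < (D:ℝ) := by exact_mod_cast by omega
  have hDpow : ((D:ℝ)) ^ n < (D:ℝ) ^ (n+1) := by
    rw [pow_succ]
    nth_rewrite 1 [← mul_one ((D:ℝ) ^ n)]
    exact mul_lt_mul_of_pos_left hD1 (by positivity)
  have hfinal : ((((n+1) * D).choose n : ℕ) : ℝ) < (Real.exp 1 * D) ^ (n+1) := by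
    calc ((((n+1) * D).choose n : ℕ) : ℝ) ≤ (((n:ℝ)+1) * D) ^ n / (Nat.factorial n) := hchoose
      _ = (((n:ℝ)+1) ^ n / (Nat.factorial n)) * (D:ℝ) ^ n := by rw [mul_pow]; ring
      _ ≤ Real.exp ((n:ℝ)+1) * (D:ℝ) ^ n := by
          apply mul_le_mul_of_nonneg_right hexp (by positivity)
      _ < Real.exp ((n:ℝ)+1) * (D:ℝ) ^ (n+1) :=
          mul_lt_mul_of_pos_left hDpow (Real.exp_pos _)
      _ = (Real.exp 1 * D) ^ (n+1) := by
          rw [mul_pow, Real.exp_one_pow]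
          push_cast
          ring_nf
  calc (Nat.card {s : Finset V // v ∈ s ∧ s.card = n + 1 ∧
        (G.induce (s : Set V)).Connected} : ℝ) ≤ (((n+1) * D).choose n : ℝ) := by
        exact_mod_cast hcardle
    _ < (Real.exp 1 * D) ^ (n+1) := hfinal
end

section
/- Let H be a δ-uniform hypergraph with N hyperedges, each intersecting at most d < 2^{δ/500} other hyperedges, and δ sufficiently large. Under an i.i.d. uniform 2-coloring of its vertices (with bias threshold δ/8), with probability at least 1/2 every connected 2,3-component of biased hyperedges has size at most log(2N)/(c·δ) for an absolute constant c > 0 (c ≈ 0.45). -/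
/-
A connected 2,3-component `T` is connected in the graph "distance at most 3 in the
intersection graph", whose degrees are at most `d + d² + d³ ≤ (d + 1)³`. Adding detours
`a → b → a` to new vertices one at a time builds a walk of length `2|T| - 2` visiting exactly
`T`, so there are at most `N (d + 1)^(6k)` such components of size `k`. The hyperedges of `T`
are pairwise disjoint, so the events "`E i` is biased", `i ∈ T`, are independent, each of
probability at most `β = 2 ∑_{i ≤ δ/8} C(δ, i) / 2^δ ≤ 2^(1 - 17δ/40)`. With `c = 1/10` and
`(d + 1)^6 β ≤ 2^(-δ/5)`, the components of size `k > log₂(2N) / (cδ)` have total probability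
at most `N 2^(-δk/5) ≤ N / (2N)²` for each of the at most `N` sizes, hence at most `1/2`.
-/

open scoped Classical

/-- The binary entropy function. -/
noncomputable def binEnt (x : ℝ) : ℝ := -x * Real.logb 2 x - (1 - x) * Real.logb 2 (1 - x)

/-- The intersection graph of a hypergraph given by hyperedges `E i`:
two hyperedges are adjacent iff they are distinct and intersect. -/
def interGraph {V : Type} [DecidableEq V] {N : ℕ} (E : Fin N → Finset V) :
    SimpleGraph (Fin N) where
  Adj i j := i ≠ j ∧ ¬ Disjoint (E i) (E j)
  symm := by
    constructor
    rintro i j ⟨h1, h2⟩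
    exact ⟨h1.symm, fun hd => h2 hd.symm⟩
  loopless := by constructor; rintro i ⟨h1, _⟩; exact h1 rfl

/-- `T` is a connected 2,3-component: its hyperedges are pairwise disjoint and any two
members are joined by a walk in the intersection graph in which among any three
consecutive hyperedges at least one belongs to `T`. -/
def IsConn23 {V : Type} [DecidableEq V] {N : ℕ} (E : Fin N → Finset V)
    (T : Finset (Fin N)) : Prop :=
  (∀ x ∈ T, ∀ y ∈ T, x ≠ y → Disjoint (E x) (E y)) ∧
  ∀ x ∈ T, ∀ y ∈ T, ∃ w : (interGraph E).Walk x y,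
    ∀ i : ℕ, (h : i + 2 < w.support.length) →
      w.support[i] ∈ T ∨ w.support[i+1] ∈ T ∨ w.support[i+2] ∈ T

/-- A hyperedge `f` is biased under coloring `c` if it has at most `δ/8` red (`true`)
vertices or at most `δ/8` blue (`false`) vertices. -/
def Biased18 {V : Type} [DecidableEq V] (δ : ℕ) (c : V → Bool) (f : Finset V) : Prop :=
  ((f.filter fun v => c v = true).card : ℝ) ≤ (δ : ℝ) / 8 ∨
  ((f.filter fun v => c v = false).card : ℝ) ≤ (δ : ℝ) / 8

open Finset

section RelConnected

variable {α : Type*}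

def IsRelConnected (R : α → α → Prop) (T : Finset α) : Prop :=
  ∀ x ∈ T, ∀ y ∈ T, Relation.ReflTransGen (fun a b => R a b ∧ a ∈ T ∧ b ∈ T) x y

theorem Relation.ReflTransGen.exists_rel_mem_notMem {R : α → α → Prop} {S : Set α} {x y : α}
    (h : Relation.ReflTransGen R x y) (hx : x ∈ S) (hy : y ∉ S) :
    ∃ a ∈ S, ∃ b ∉ S, R a b := by
  induction h with
  | refl => exact absurd hx hy
  | @tail b c _ hbc ih =>
    by_cases hb : b ∈ S
    · exact ⟨b, hb, c, hy, hbc⟩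
    · exact ih hb

variable [DecidableEq α] {R : α → α → Prop}

theorem IsRelConnected.exists_isChain_of_lt_card (hR : ∀ ⦃a b⦄, R a b → R b a) {T : Finset α}
    (hT : IsRelConnected R T) {n : ℕ} (hn : n < T.card) :
    ∃ l : List α, l.IsChain R ∧ l.length = 2 * n + 1 ∧ l.toFinset ⊆ T ∧
      l.toFinset.card = n + 1 := by
  induction n with
  | zero =>
    obtain ⟨v, hv⟩ := card_pos.mp hn
    exact ⟨[v], .singleton v, rfl, by simpa using hv, rfl⟩
  | succ n ih =>
    obtain ⟨l, hchain, hlen, hsub, hcard⟩ := ih (by omega)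
    obtain ⟨x, hx⟩ : l.toFinset.Nonempty := card_pos.mp (by omega)
    obtain ⟨y, hyT, hyl⟩ := exists_mem_notMem_of_card_lt_card (s := l.toFinset) (t := T)
      (by omega)
    -- splice the detour `a, b, a` into `l` at an occurrence of `a`
    obtain ⟨a, ha, b, hb, hab, -, hbT⟩ :=
      (hT x (hsub hx) y hyT).exists_rel_mem_notMem (S := ↑l.toFinset) hx hyl
    obtain ⟨s, t, rfl⟩ := List.append_of_mem (List.mem_toFinset.mp ha)
    refine ⟨s ++ a :: b :: a :: t, ?_, ?_, ?_, ?_⟩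
    · rw [List.isChain_split, List.isChain_cons_cons, List.isChain_cons_cons] at *
      exact ⟨hchain.1, hab, hR hab, hchain.2⟩
    · simp only [List.length_append, List.length_cons] at hlen ⊢
      omega
    · intro z hz
      simp only [List.mem_toFinset, List.mem_append, List.mem_cons] at hz
      rcases hz with hz | rfl | rfl | rfl | hz
      · exact hsub (by simp [hz])
      · exact hsub (by simp)
      · exact hbT
      · exact hsub (by simp)
      · exact hsub (by simp [hz])
    · have : (s ++ a :: b :: a :: t).toFinset = insert b (s ++ a :: t).toFinset := by
        ext z; simp only [List.mem_toFinset, List.mem_append, List.mem_cons, mem_insert]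
        tauto
      rw [this, card_insert_of_notMem (by simpa using hb), hcard]

theorem IsRelConnected.exists_isChain_toFinset_eq (hR : ∀ ⦃a b⦄, R a b → R b a) {T : Finset α}
    (hT : IsRelConnected R T) (hne : T.Nonempty) :
    ∃ l : List α, l.IsChain R ∧ l.length = 2 * (T.card - 1) + 1 ∧ l.toFinset = T := by
  obtain ⟨l, hchain, hlen, hsub, hcard⟩ :=
    hT.exists_isChain_of_lt_card hR (n := T.card - 1) (by have := hne.card_pos; omega)
  exact ⟨l, hchain, hlen,
    eq_of_subset_of_card_le hsub (by have := hne.card_pos; omega)⟩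

end RelConnected

section ChainCount

variable {α : Type*} [Fintype α] (R : α → α → Prop)

noncomputable def chainFns (n : ℕ) : Finset (Fin (n + 1) → α) :=
  univ.filter fun g => ∀ i : Fin n, R (g i.castSucc) (g i.succ)

variable {R} {D : ℕ}

theorem card_chainFns_le (hD : ∀ a, (univ.filter (R a)).card ≤ D) (n : ℕ) :
    (chainFns R n).card ≤ Fintype.card α * D ^ n := by
  induction n with
  | zero => simp [chainFns]
  | succ n ih =>
    have hinit : ∀ g ∈ chainFns R (n + 1), Fin.init g ∈ chainFns R n := by
      simp only [chainFns, mem_filter, mem_univ, true_and]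
      intro g hg i
      simpa [Fin.init] using hg i.castSucc
    have hfiber : ∀ h ∈ chainFns R n,
        ((chainFns R (n + 1)).filter (Fin.init · = h)).card ≤ D := by
      intro h _
      refine (card_le_card (t := (univ.filter (R (h (Fin.last n)))).image
        (Fin.snoc h)) ?_).trans (card_image_le.trans (hD _))
      intro g hg
      simp only [chainFns, mem_filter, mem_univ, true_and] at hg
      obtain ⟨hchain, rfl⟩ := hg
      refine mem_image.mpr ⟨g (Fin.last _), ?_, Fin.snoc_init_self g⟩
      exact mem_filter.mpr
        ⟨mem_univ _, by simpa [Fin.init] using hchain (Fin.last n)⟩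
    calc (chainFns R (n + 1)).card ≤ D * (chainFns R n).card :=
          card_le_mul_card_image_of_maps_to hinit D hfiber
      _ ≤ Fintype.card α * D ^ (n + 1) := by
          rw [pow_succ, mul_comm D, ← mul_assoc]
          exact Nat.mul_le_mul_right D ih

theorem card_isRelConnected_le [DecidableEq α] (hR : ∀ ⦃a b⦄, R a b → R b a)
    (hD : ∀ a, (univ.filter (R a)).card ≤ D) {k : ℕ} (hk : 1 ≤ k) :
    (univ.filter fun T : Finset α => IsRelConnected R T ∧ T.card = k).card ≤
      Fintype.card α * D ^ (2 * (k - 1)) := by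
  refine (card_le_card (t := (chainFns R (2 * (k - 1))).image
    fun g => univ.image g) ?_).trans
    (card_image_le.trans (card_chainFns_le hD (2 * (k - 1))))
  intro T hT
  simp only [mem_filter, mem_univ, true_and] at hT
  obtain ⟨hconn, rfl⟩ := hT
  obtain ⟨l, hchain, hlen, rfl⟩ :=
    hconn.exists_isChain_toFinset_eq hR (card_pos.mp (by omega))
  refine mem_image.mpr ⟨fun i => l[(i : ℕ)], ?_, ?_⟩
  · simp only [chainFns, mem_filter, mem_univ, true_and]
    exact fun i => List.isChain_iff_getElem.mp hchain i (by omega)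
  · ext x
    simp only [mem_image, mem_univ, true_and, List.mem_toFinset,
      List.mem_iff_getElem]
    exact ⟨fun ⟨i, hi⟩ => ⟨i, by omega, hi⟩, fun ⟨i, hi, hx⟩ => ⟨⟨i, by omega⟩, hx⟩⟩

end ChainCount

section WithinThree

variable {α : Type*}

def WithinThree (A : α → α → Prop) (a b : α) : Prop :=
  A a b ∨ (∃ u, A a u ∧ A u b) ∨ ∃ u w, A a u ∧ A u w ∧ A w b

def MeetsEveryThree (T : Finset α) (l : List α) : Prop :=
  ∀ i (h : i + 2 < l.length), l[i] ∈ T ∨ l[i + 1] ∈ T ∨ l[i + 2] ∈ T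

variable {A : α → α → Prop} {T : Finset α}

theorem withinThree_symm (hA : ∀ ⦃a b⦄, A a b → A b a) ⦃a b : α⦄ (h : WithinThree A a b) :
    WithinThree A b a := by
  rcases h with h | ⟨u, h₁, h₂⟩ | ⟨u, w, h₁, h₂, h₃⟩
  · exact .inl (hA h)
  · exact .inr (.inl ⟨u, hA h₂, hA h₁⟩)
  · exact .inr (.inr ⟨w, u, hA h₃, hA h₂, hA h₁⟩)

theorem MeetsEveryThree.tail {a : α} {l : List α} (h : MeetsEveryThree T (a :: l)) :
    MeetsEveryThree T l :=
  fun i hi => by simpa [Nat.add_right_comm i 1] using h (i + 1) (by simp; omega)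

theorem reflTransGen_withinThree_of_meetsEveryThree :
    ∀ (a : α) (l : List α), (a :: l).IsChain A → a ∈ T →
      (a :: l).getLast (List.cons_ne_nil a l) ∈ T → MeetsEveryThree T (a :: l) →
      Relation.ReflTransGen (fun x y => WithinThree A x y ∧ x ∈ T ∧ y ∈ T)
        a ((a :: l).getLast (List.cons_ne_nil a l))
  | _, [], _, _, _, _ => .refl
  | a, b :: l, hchain, ha, hlast, hmeets => by
    simp only [List.isChain_cons_cons, List.getLast_cons_cons] at hchain hlast ⊢
    by_cases hb : b ∈ T
    · exact .head ⟨.inl hchain.1, ha, hb⟩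
        (reflTransGen_withinThree_of_meetsEveryThree b l hchain.2 hb hlast hmeets.tail)
    match l, hchain, hlast, hmeets with
    | [], _, hlast, _ => exact absurd hlast hb
    | c :: l, hchain, hlast, hmeets =>
      simp only [List.isChain_cons_cons, List.getLast_cons_cons] at hchain hlast ⊢
      by_cases hc : c ∈ T
      · exact .head ⟨.inr (.inl ⟨b, hchain.1, hchain.2.1⟩), ha, hc⟩
          (reflTransGen_withinThree_of_meetsEveryThree c l hchain.2.2 hc hlast
            hmeets.tail.tail)
      match l, hchain, hlast, hmeets with
      | [], _, hlast, _ => exact absurd hlast hc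
      | e :: l, hchain, hlast, hmeets =>
        simp only [List.isChain_cons_cons, List.getLast_cons_cons] at hchain hlast ⊢
        have he : e ∈ T := by
          simpa [hb, hc] using hmeets.tail 0 (by simp)
        exact .head ⟨.inr (.inr ⟨b, c, hchain.1, hchain.2.1, hchain.2.2.1⟩), ha, he⟩
          (reflTransGen_withinThree_of_meetsEveryThree e l hchain.2.2.2 he hlast
            hmeets.tail.tail.tail)

theorem card_filter_withinThree_le [Fintype α] [DecidableEq α] {D : ℕ}
    (hD : ∀ a, (univ.filter (A a)).card ≤ D) (a : α) :
    (univ.filter (WithinThree A a)).card ≤ D + D ^ 2 + D ^ 3 := by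
  let nbhd : Finset α → Finset α := fun S => S.biUnion fun u => univ.filter (A u)
  have card_nbhd : ∀ S, (nbhd S).card ≤ S.card * D := fun S =>
    card_biUnion_le_card_mul _ _ _ fun u _ => hD u
  have mem_nbhd : ∀ {S u b}, u ∈ S → A u b → b ∈ nbhd S := fun hu hub =>
    mem_biUnion.mpr ⟨_, hu, mem_filter.mpr ⟨mem_univ _, hub⟩⟩
  let N₁ := univ.filter (A a)
  have mem_N₁ : ∀ {b}, A a b → b ∈ N₁ := fun h => mem_filter.mpr ⟨mem_univ _, h⟩
  have hsub : univ.filter (WithinThree A a) ⊆ N₁ ∪ nbhd N₁ ∪ nbhd (nbhd N₁) := by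
    intro b hb
    simp only [mem_union]
    rcases (mem_filter.mp hb).2 with h | ⟨u, h₁, h₂⟩ | ⟨u, w, h₁, h₂, h₃⟩
    · exact .inl (.inl (mem_N₁ h))
    · exact .inl (.inr (mem_nbhd (mem_N₁ h₁) h₂))
    · exact .inr (mem_nbhd (mem_nbhd (mem_N₁ h₁) h₂) h₃)
  calc (univ.filter (WithinThree A a)).card
      ≤ N₁.card + (nbhd N₁).card + (nbhd (nbhd N₁)).card :=
        (card_le_card hsub).trans <| (card_union_le _ _).trans <|
          Nat.add_le_add_right (card_union_le _ _) _
    _ ≤ D + D ^ 2 + D ^ 3 := by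
        have h₁ : N₁.card ≤ D := hD a
        have h₂ : (nbhd N₁).card ≤ D ^ 2 :=
          (card_nbhd _).trans (by rw [sq]; exact Nat.mul_le_mul_right D h₁)
        have h₃ : (nbhd (nbhd N₁)).card ≤ D ^ 3 :=
          (card_nbhd _).trans (by rw [pow_succ]; exact Nat.mul_le_mul_right D h₂)
        omega

end WithinThree

section Hypergraph

variable {V : Type} [DecidableEq V] {N : ℕ} {E : Fin N → Finset V}

theorem IsConn23.isRelConnected {T : Finset (Fin N)} (hT : IsConn23 E T) :
    IsRelConnected (WithinThree (interGraph E).Adj) T := by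
  intro x hx y hy
  obtain ⟨w, hmeets⟩ := hT.2 x hx y hy
  have hlast : (x :: w.support.tail).getLast (List.cons_ne_nil _ _) = y := by
    simp only [w.cons_tail_support, w.getLast_support]
  rw [← hlast]
  refine reflTransGen_withinThree_of_meetsEveryThree x _ ?_ hx (hlast.symm ▸ hy) ?_
  · rw [w.cons_tail_support]; exact w.isChain_adj_support
  · rw [w.cons_tail_support]; exact hmeets

theorem card_filter_interGraph_adj_le {d : ℕ}
    (hdeg : ∀ i : Fin N, Nat.card {j : Fin N // j ≠ i ∧ ¬ Disjoint (E i) (E j)} ≤ d)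
    (i : Fin N) : (univ.filter ((interGraph E).Adj i)).card ≤ d := by
  convert hdeg i using 1
  rw [Nat.card_eq_fintype_card, Fintype.card_subtype]
  exact congrArg card (filter_congr fun j _ => by
    rw [interGraph, ne_comm])

theorem card_isConn23_le {d k : ℕ}
    (hdeg : ∀ i : Fin N, Nat.card {j : Fin N // j ≠ i ∧ ¬ Disjoint (E i) (E j)} ≤ d)
    (hk : 1 ≤ k) :
    (univ.filter fun T : Finset (Fin N) => IsConn23 E T ∧ T.card = k).card ≤
      N * ((d + 1) ^ 6) ^ k := by
  have hsub : univ.filter (fun T : Finset (Fin N) => IsConn23 E T ∧ T.card = k) ⊆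
      univ.filter fun T => IsRelConnected (WithinThree (interGraph E).Adj) T ∧
        T.card = k :=
    fun T hT => by
      simp only [mem_filter, mem_univ, true_and] at hT ⊢
      exact ⟨hT.1.isRelConnected, hT.2⟩
  have hcount := card_isRelConnected_le (withinThree_symm fun _ _ h => h.symm)
    (card_filter_withinThree_le (card_filter_interGraph_adj_le hdeg)) hk
  rw [Fintype.card_fin] at hcount
  refine (card_le_card hsub).trans (hcount.trans (Nat.mul_le_mul_left N ?_))
  calc (d + d ^ 2 + d ^ 3) ^ (2 * (k - 1)) ≤ ((d + 1) ^ 3) ^ (2 * (k - 1)) :=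
        Nat.pow_le_pow_left (by ring_nf; omega) _
    _ ≤ ((d + 1) ^ 6) ^ k := by
        rw [← pow_mul, ← pow_mul]
        exact Nat.pow_le_pow_right (by omega) (by omega)

end Hypergraph

section Colorings

variable {V β : Type*} [Fintype V] [DecidableEq V] [Fintype β]

theorem card_filter_and_mul_card_univ {f : Finset V} {P Q : (V → β) → Prop}
    (hP : DependsOn P f) (hQ : DependsOn Q (↑f)ᶜ) :
    (univ.filter fun c => P c ∧ Q c).card * (univ : Finset (V → β)).card =
      (univ.filter P).card * (univ.filter Q).card := by
  rw [← card_product, ← card_product]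
  -- exchange the two colorings on `f`
  let swap : (V → β) × (V → β) → (V → β) × (V → β) :=
    fun p => (f.piecewise p.1 p.2, f.piecewise p.2 p.1)
  have swap_swap : ∀ p, swap (swap p) = p := fun p => by
    ext v <;> by_cases hv : v ∈ f <;> simp [swap, hv]
  refine card_nbij' swap swap ?_ ?_ (fun p _ => swap_swap p) (fun p _ => swap_swap p)
  · intro p hp
    simp only [coe_product, Set.mem_prod, coe_filter, Set.mem_ofPred_eq,
      mem_univ, true_and, coe_univ, Set.mem_univ, and_true] at hp ⊢
    have h₁ : P p.1 = P (swap p).1 := hP fun v hv => by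
      simp [swap, piecewise_eq_of_mem f _ _ (mem_coe.mp hv)]
    have h₂ : Q p.1 = Q (swap p).2 := hQ fun v hv => by
      simp [swap, piecewise_eq_of_notMem f _ _ (mem_coe.not.mp hv)]
    exact ⟨h₁ ▸ hp.1, h₂ ▸ hp.2⟩
  · intro p hp
    simp only [coe_product, Set.mem_prod, coe_filter, Set.mem_ofPred_eq,
      mem_univ, true_and, coe_univ, Set.mem_univ, and_true] at hp ⊢
    have h₁ : P p.1 = P (swap p).1 := hP fun v hv => by
      simp [swap, piecewise_eq_of_mem f _ _ (mem_coe.mp hv)]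
    have h₂ : Q p.2 = Q (swap p).1 := hQ fun v hv => by
      simp [swap, piecewise_eq_of_notMem f _ _ (mem_coe.not.mp hv)]
    exact ⟨h₁ ▸ hp.1, h₂ ▸ hp.2⟩

theorem card_filter_forall_le_pow [Nonempty β] {ι : Type*} [DecidableEq ι] {E : ι → Finset V}
    {P : ι → (V → β) → Prop} {p : ℝ} (hp : 0 ≤ p) {T : Finset ι}
    (hdisj : (T : Set ι).PairwiseDisjoint E) (hP : ∀ i ∈ T, DependsOn (P i) (E i))
    (hPp : ∀ i ∈ T, ((univ.filter (P i)).card : ℝ) ≤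
      p * (univ : Finset (V → β)).card) :
    ((univ.filter fun c => ∀ i ∈ T, P i c).card : ℝ) ≤
      p ^ T.card * (univ : Finset (V → β)).card := by
  induction T using Finset.induction_on with
  | empty => simp
  | @insert i₀ T hi₀ ih =>
    simp only [coe_insert, Set.pairwiseDisjoint_insert, mem_insert,
      forall_eq_or_imp] at hdisj hP hPp
    have hrest : DependsOn (fun c => ∀ i ∈ T, P i c) (↑(E i₀))ᶜ := fun c c' hcc' =>
      propext <| forall₂_congr fun i hi => (hP.2 i hi fun v hv =>
        hcc' v (disjoint_left.mp (hdisj.2 i hi (by rintro rfl; exact hi₀ hi)).symm hv)).to_iff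
    have hprod := card_filter_and_mul_card_univ hP.1 hrest
    simp only [forall_mem_insert]
    have hU : (0 : ℝ) < (univ : Finset (V → β)).card := by
      exact_mod_cast card_pos.mpr univ_nonempty
    rw [card_insert_of_notMem hi₀, ← mul_le_mul_iff_left₀ hU]
    calc ((univ.filter fun c => P i₀ c ∧ ∀ i ∈ T, P i c).card : ℝ) *
          (univ : Finset (V → β)).card
        = (univ.filter (P i₀)).card * (univ.filter fun c => ∀ i ∈ T, P i c).card := by
          norm_cast; convert hprod using 3 <;> ext <;> simp
      _ ≤ (p * (univ : Finset (V → β)).card) *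
          (p ^ T.card * (univ : Finset (V → β)).card) :=
          mul_le_mul hPp.1 (ih hdisj.1 hP.2 hPp.2) (by positivity) (by positivity)
      _ = p ^ (T.card + 1) * (univ : Finset (V → β)).card *
          (univ : Finset (V → β)).card := by ring

end Colorings

section Bias

variable {V : Type} [DecidableEq V]

theorem dependsOn_biased18 (δ : ℕ) (f : Finset V) :
    DependsOn (fun c : V → Bool => Biased18 δ c f) f := fun c c' h => by
  simp only [Biased18]
  rw [filter_congr fun v hv => by rw [h v hv],
    filter_congr (p := fun v => c v = false) fun v hv => by rw [h v hv]]

variable [Fintype V]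

theorem card_filter_card_filter_eq_le (f : Finset V) (b : Bool) (m : ℕ) :
    (univ.filter fun c : V → Bool => (f.filter (c · = b)).card ≤ m).card ≤
      (∑ i ∈ range (m + 1), f.card.choose i) * 2 ^ (Fintype.card V - f.card) := by
  -- a coloring is determined by its `b`-coloured vertices inside and outside `f`
  let split : (V → Bool) → Finset V × Finset V :=
    fun c => (f.filter (c · = b), fᶜ.filter (c · = b))
  have hmaps : Set.MapsTo split
      ↑(univ.filter fun c : V → Bool => (f.filter (c · = b)).card ≤ m)
      ↑((range (m + 1)).biUnion (f.powersetCard ·) ×ˢ fᶜ.powerset) := by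
    intro c hc
    simp only [coe_filter, mem_univ, true_and, Set.mem_ofPred_eq] at hc
    simp only [split, coe_product, Set.mem_prod, mem_coe, mem_biUnion,
      mem_range, mem_powersetCard, mem_powerset]
    exact ⟨⟨_, Nat.lt_succ_of_le hc, filter_subset _ _, rfl⟩, filter_subset _ _⟩
  have hinj : Set.InjOn split
      ↑(univ.filter fun c : V → Bool => (f.filter (c · = b)).card ≤ m) := by
    intro c _ c' _ h
    simp only [split, Prod.mk.injEq, Finset.ext_iff, mem_filter, mem_compl] at h
    funext v
    have hv : c v = b ↔ c' v = b := by
      by_cases hvf : v ∈ f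
      · simpa [hvf] using h.1 v
      · simpa [hvf] using h.2 v
    cases hc : c v <;> cases hc' : c' v <;> cases b <;> simp_all
  calc _ ≤ ((range (m + 1)).biUnion (f.powersetCard ·) ×ˢ fᶜ.powerset).card :=
        card_le_card_of_injOn split hmaps hinj
    _ ≤ (∑ i ∈ range (m + 1), f.card.choose i) * 2 ^ (Fintype.card V - f.card) := by
        rw [card_product, card_powerset, card_compl]
        refine Nat.mul_le_mul_right _ (card_biUnion_le.trans_eq ?_)
        simp only [card_powersetCard]

theorem card_filter_biased18_le (δ : ℕ) (f : Finset V) :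
    (univ.filter fun c : V → Bool => Biased18 δ c f).card ≤
      2 * (∑ i ∈ range (δ / 8 + 1), f.card.choose i) * 2 ^ (Fintype.card V - f.card) := by
  have hfloor : ∀ x : ℕ, (x : ℝ) ≤ (δ : ℝ) / 8 ↔ x ≤ δ / 8 := fun x => by
    rw [le_div_iff₀ (by norm_num), Nat.le_div_iff_mul_le (by norm_num)]
    exact_mod_cast Iff.rfl
  have hsub : univ.filter (fun c : V → Bool => Biased18 δ c f) ⊆
      (univ.filter fun c : V → Bool => (f.filter (c · = true)).card ≤ δ / 8) ∪
        univ.filter fun c : V → Bool => (f.filter (c · = false)).card ≤ δ / 8 := by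
    intro c hc
    simp only [mem_filter, mem_univ, true_and, mem_union, Biased18,
      hfloor] at hc ⊢
    exact hc
  refine (card_le_card hsub).trans ((card_union_le _ _).trans ?_)
  have htrue := card_filter_card_filter_eq_le f true (δ / 8)
  have hfalse := card_filter_card_filter_eq_le f false (δ / 8)
  rw [two_mul, add_mul]
  exact Nat.add_le_add htrue hfalse

noncomputable def biasBound (δ : ℕ) : ℝ :=
  2 * (∑ i ∈ range (δ / 8 + 1), (δ.choose i : ℝ)) / 2 ^ δ

theorem biasBound_nonneg (δ : ℕ) : 0 ≤ biasBound δ := by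
  rw [biasBound]; positivity

theorem card_filter_biased18_le_biasBound {δ : ℕ} {f : Finset V} (hf : f.card = δ) :
    ((univ.filter fun c : V → Bool => Biased18 δ c f).card : ℝ) ≤
      biasBound δ * (univ : Finset (V → Bool)).card := by
  have hδV : δ ≤ Fintype.card V := hf ▸ card_le_univ f
  have h := card_filter_biased18_le δ f
  rw [hf] at h
  calc ((univ.filter fun c : V → Bool => Biased18 δ c f).card : ℝ)
      ≤ 2 * (∑ i ∈ range (δ / 8 + 1), (δ.choose i : ℝ)) * 2 ^ (Fintype.card V - δ) := by
        exact_mod_cast h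
    _ = biasBound δ * (univ : Finset (V → Bool)).card := by
        rw [biasBound, card_univ, Fintype.card_fun, Fintype.card_bool, Nat.cast_pow,
          Nat.cast_ofNat, ← Nat.sub_add_cancel hδV, pow_add, Nat.add_sub_cancel]
        field_simp

end Bias

section Estimates

theorem sum_choose_mul_pow_le_one {p : ℝ} (hp₀ : 0 ≤ p) (hp : p ≤ 1 / 2) {m n : ℕ}
    (hmn : m ≤ n) :
    (∑ i ∈ range (m + 1), (n.choose i : ℝ)) * (p ^ m * (1 - p) ^ (n - m)) ≤ 1 := by
  have h1p : 0 ≤ 1 - p := by linarith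
  have hterm : ∀ i ∈ range (m + 1),
      (n.choose i : ℝ) * (p ^ m * (1 - p) ^ (n - m)) ≤ p ^ i * (1 - p) ^ (n - i) * n.choose i := by
    intro i hi
    have him : i ≤ m := Nat.lt_succ_iff.mp (mem_range.mp hi)
    have hpq : p ^ (m - i) ≤ (1 - p) ^ (m - i) := pow_le_pow_left₀ hp₀ (by linarith) _
    calc (n.choose i : ℝ) * (p ^ m * (1 - p) ^ (n - m))
        = (n.choose i : ℝ) * p ^ i * (p ^ (m - i) * (1 - p) ^ (n - m)) := by
          rw [← Nat.add_sub_of_le him, pow_add, Nat.add_sub_cancel_left]; ring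
      _ ≤ (n.choose i : ℝ) * p ^ i * ((1 - p) ^ (m - i) * (1 - p) ^ (n - m)) :=
          mul_le_mul_of_nonneg_left (mul_le_mul_of_nonneg_right hpq (pow_nonneg h1p _))
            (by positivity)
      _ = p ^ i * (1 - p) ^ (n - i) * n.choose i := by
          rw [← pow_add, show m - i + (n - m) = n - i by omega]; ring
  calc (∑ i ∈ range (m + 1), (n.choose i : ℝ)) * (p ^ m * (1 - p) ^ (n - m))
      ≤ ∑ i ∈ range (m + 1), p ^ i * (1 - p) ^ (n - i) * n.choose i := by
        rw [sum_mul]; exact sum_le_sum hterm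
    _ ≤ ∑ i ∈ range (n + 1), p ^ i * (1 - p) ^ (n - i) * n.choose i :=
        sum_le_sum_of_subset_of_nonneg (range_subset_range.mpr (by omega))
          fun i _ _ => by positivity
    _ = 1 := by rw [← add_pow, add_sub_cancel, one_pow]

theorem two_mul_sum_choose_le (n : ℕ) :
    2 * ∑ i ∈ range (n / 8 + 1), (n.choose i : ℝ) ≤ 2 ^ (1 + 23 / 40 * (n : ℝ)) := by
  have hm : ((n / 8 : ℕ) : ℝ) ≤ n / 8 := by
    rw [le_div_iff₀ (by norm_num)]; exact_mod_cast Nat.div_mul_le_self n 8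
  have hsum := sum_choose_mul_pow_le_one (p := 1 / 8) (by norm_num) (by norm_num)
    (Nat.div_le_self n 8)
  have hS : ∑ i ∈ range (n / 8 + 1), (n.choose i : ℝ) ≤ 8 ^ (n / 8) * (8 / 7) ^ (n - n / 8) := by
    have hinv : (8 : ℝ) ^ (n / 8) * (8 / 7) ^ (n - n / 8) =
        1 / ((1 / 8) ^ (n / 8) * (1 - 1 / 8) ^ (n - n / 8)) := by
      rw [one_div, mul_inv, ← inv_pow, ← inv_pow]; norm_num
    rwa [hinv, le_div_iff₀ (by positivity)]
  have h8 : (8 : ℝ) ^ (n / 8) ≤ 2 ^ (3 / 8 * (n : ℝ)) := by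
    rw [show (8 : ℝ) = 2 ^ (3 : ℝ) by norm_num, ← Real.rpow_natCast, ← Real.rpow_mul (by norm_num)]
    exact Real.rpow_le_rpow_of_exponent_le (by norm_num) (by linarith)
  have h87 : (8 / 7 : ℝ) ^ (n - n / 8) ≤ 2 ^ (1 / 5 * (n : ℝ)) := by
    calc (8 / 7 : ℝ) ^ (n - n / 8) ≤ (8 / 7) ^ n := pow_le_pow_right₀ (by norm_num) (by omega)
      _ = ((8 / 7 : ℝ) ^ (5 : ℝ)) ^ (1 / 5 * (n : ℝ)) := by
          rw [← Real.rpow_mul (by norm_num), ← Real.rpow_natCast]; ring_nf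
      _ ≤ 2 ^ (1 / 5 * (n : ℝ)) :=
          Real.rpow_le_rpow (by positivity) (by norm_num) (by positivity)
  calc 2 * ∑ i ∈ range (n / 8 + 1), (n.choose i : ℝ)
      ≤ 2 * (2 ^ (3 / 8 * (n : ℝ)) * 2 ^ (1 / 5 * (n : ℝ))) := by
        gcongr
        exact hS.trans (mul_le_mul h8 h87 (by positivity) (by positivity))
    _ = 2 ^ (1 + 23 / 40 * (n : ℝ)) := by
        rw [← Real.rpow_add two_pos]
        conv_rhs => rw [Real.rpow_add two_pos, Real.rpow_one]
        ring_nf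

theorem sq_mul_two_rpow_pow_le_one {a x : ℝ} (ha : 0 < a) (hx : 0 ≤ x) {k : ℕ}
    (hk : Real.logb 2 x / a < k) : x ^ 2 * ((2 : ℝ) ^ (-(2 * a))) ^ k ≤ 1 := by
  rcases hx.eq_or_lt with rfl | hx
  · simp
  have hlt : x < 2 ^ (a * k) :=
    (Real.logb_lt_iff_lt_rpow (by norm_num) hx).mp (by rwa [div_lt_iff₀' ha] at hk)
  have hpow : ((2 : ℝ) ^ (-(2 * a))) ^ k = ((2 ^ (a * k)) ^ 2)⁻¹ := by
    rw [← Real.rpow_natCast, ← Real.rpow_mul (by norm_num), ← Real.rpow_natCast,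
      ← Real.rpow_mul (by norm_num), ← Real.rpow_neg (by norm_num)]
    ring_nf
  rw [hpow, ← div_eq_mul_inv, div_le_one (by positivity)]
  exact pow_le_pow_left₀ hx.le hlt.le 2

theorem succ_pow_six_mul_biasBound_le {d δ : ℕ} (hδ : 40 ≤ δ)
    (hd : (d : ℝ) < 2 ^ ((δ : ℝ) / 500)) :
    ((d : ℝ) + 1) ^ 6 * biasBound δ ≤ (2 : ℝ) ^ (-(2 * (1 / 10 * (δ : ℝ)))) := by
  have hd₁ : (d : ℝ) + 1 ≤ 2 ^ (1 + (δ : ℝ) / 500) := by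
    have : (1 : ℝ) ≤ 2 ^ ((δ : ℝ) / 500) := Real.one_le_rpow (by norm_num) (by positivity)
    rw [Real.rpow_add two_pos, Real.rpow_one]
    linarith
  have hd₆ : ((d : ℝ) + 1) ^ 6 ≤ 2 ^ (6 + 6 / 500 * (δ : ℝ)) := by
    calc ((d : ℝ) + 1) ^ 6 ≤ (2 ^ (1 + (δ : ℝ) / 500)) ^ 6 := by gcongr
      _ = 2 ^ (6 + 6 / 500 * (δ : ℝ)) := by
          rw [← Real.rpow_natCast, ← Real.rpow_mul (by norm_num)]; ring_nf
  have hβ : biasBound δ ≤ 2 ^ (1 + 23 / 40 * (δ : ℝ) - δ) := by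
    rw [biasBound, Real.rpow_sub two_pos, Real.rpow_natCast]
    gcongr
    exact two_mul_sum_choose_le δ
  have hδ' : (40 : ℝ) ≤ δ := by exact_mod_cast hδ
  calc ((d : ℝ) + 1) ^ 6 * biasBound δ
      ≤ 2 ^ (6 + 6 / 500 * (δ : ℝ)) * 2 ^ (1 + 23 / 40 * (δ : ℝ) - δ) :=
        mul_le_mul hd₆ hβ (biasBound_nonneg δ) (by positivity)
    _ = 2 ^ (6 + 6 / 500 * (δ : ℝ) + (1 + 23 / 40 * (δ : ℝ) - δ)) :=
        (Real.rpow_add two_pos _ _).symm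
    _ ≤ (2 : ℝ) ^ (-(2 * (1 / 10 * (δ : ℝ)))) :=
        Real.rpow_le_rpow_of_exponent_le (by norm_num) (by linarith)

end Estimates

section Components

variable {V : Type} [DecidableEq V] {N : ℕ} {E : Fin N → Finset V}

noncomputable def largeConn23 (E : Fin N → Finset V) (K : ℝ) : Finset (Finset (Fin N)) :=
  univ.filter fun T => IsConn23 E T ∧ K < T.card

theorem card_filter_exists_large_biased_le [Fintype V] {δ : ℕ} (hcard : ∀ i, (E i).card = δ)
    (K : ℝ) :
    ((univ.filter fun c : V → Bool => ¬ ∀ T : Finset (Fin N), IsConn23 E T →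
        (∀ i ∈ T, Biased18 δ c (E i)) → (T.card : ℝ) ≤ K).card : ℝ) ≤
      (∑ T ∈ largeConn23 E K, biasBound δ ^ T.card) * (univ : Finset (V → Bool)).card := by
  have hsub : (univ.filter fun c : V → Bool => ¬ ∀ T : Finset (Fin N), IsConn23 E T →
      (∀ i ∈ T, Biased18 δ c (E i)) → (T.card : ℝ) ≤ K) ⊆
      (largeConn23 E K).biUnion fun T => univ.filter fun c => ∀ i ∈ T, Biased18 δ c (E i) := by
    intro c hc
    simp only [mem_filter, mem_univ, true_and, not_forall, not_le, exists_prop] at hc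
    obtain ⟨T, hT, hbiased, hlarge⟩ := hc
    exact mem_biUnion.mpr ⟨T, mem_filter.mpr ⟨mem_univ _, hT, hlarge⟩,
      mem_filter.mpr ⟨mem_univ _, hbiased⟩⟩
  calc _ ≤ (∑ T ∈ largeConn23 E K,
        (univ.filter fun c : V → Bool => ∀ i ∈ T, Biased18 δ c (E i)).card : ℝ) := by
        exact_mod_cast (card_le_card hsub).trans card_biUnion_le
    _ ≤ _ := by
        rw [sum_mul]
        refine sum_le_sum fun T hT => ?_
        -- `∀ i ∈ T` over `Fin N` picks a different decidability instance than in the lemma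
        refine Eq.trans_le (by congr 2; ext; simp) (card_filter_forall_le_pow
          (P := fun i c => Biased18 δ c (E i)) (biasBound_nonneg δ)
          (mem_filter.mp hT).2.1.1 (fun i _ => dependsOn_biased18 δ (E i))
          (fun i _ => card_filter_biased18_le_biasBound (hcard i)))

variable {d : ℕ} {β ρ K : ℝ}

theorem sum_largeConn23_card_eq_le
    (hdeg : ∀ i : Fin N, Nat.card {j : Fin N // j ≠ i ∧ ¬ Disjoint (E i) (E j)} ≤ d)
    (hβ : 0 ≤ β) (hβρ : ((d : ℝ) + 1) ^ 6 * β ≤ ρ)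
    (hρ : ∀ k : ℕ, K < k → (2 * N : ℝ) ^ 2 * ρ ^ k ≤ 1) {k : ℕ} (hk₁ : 1 ≤ k) (hkN : k ≤ N) :
    ∑ T ∈ (largeConn23 E K).filter (·.card = k), β ^ T.card ≤ 1 / (2 * N) := by
  have hN : (1 : ℝ) ≤ N := by exact_mod_cast hk₁.trans hkN
  by_cases hKk : K < k
  swap
  · rw [sum_eq_zero fun T hT => by
      simp only [largeConn23, mem_filter, mem_univ, true_and] at hT
      exact absurd (hT.2 ▸ hT.1.2) hKk]
    positivity
  have hcount : ((largeConn23 E K).filter (·.card = k)).card ≤ N * ((d + 1) ^ 6) ^ k := by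
    refine le_trans (card_le_card fun T hT => ?_) (card_isConn23_le hdeg hk₁)
    simp only [largeConn23, mem_filter, mem_univ, true_and] at hT ⊢
    exact ⟨hT.1.1, hT.2⟩
  have hρ₀ : 0 ≤ ρ := le_trans (by positivity) hβρ
  calc ∑ T ∈ (largeConn23 E K).filter (·.card = k), β ^ T.card
      = ((largeConn23 E K).filter (·.card = k)).card * β ^ k := by
        rw [sum_congr rfl fun T hT => by rw [(mem_filter.mp hT).2], sum_const, nsmul_eq_mul]
    _ ≤ (N * ((d + 1) ^ 6) ^ k : ℕ) * β ^ k := by gcongr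
    _ = N * (((d : ℝ) + 1) ^ 6 * β) ^ k := by push_cast; rw [mul_pow]; ring
    _ ≤ N * ρ ^ k := by gcongr
    _ ≤ 1 / (2 * N) := by
        rw [le_div_iff₀ (by positivity)]
        nlinarith [pow_nonneg hρ₀ k, hρ k hKk]

theorem sum_largeConn23_pow_card_le_half
    (hdeg : ∀ i : Fin N, Nat.card {j : Fin N // j ≠ i ∧ ¬ Disjoint (E i) (E j)} ≤ d)
    (hβ : 0 ≤ β) (hβρ : ((d : ℝ) + 1) ^ 6 * β ≤ ρ) (hK : 0 ≤ K)
    (hρ : ∀ k : ℕ, K < k → (2 * N : ℝ) ^ 2 * ρ ^ k ≤ 1) :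
    ∑ T ∈ largeConn23 E K, β ^ T.card ≤ 1 / 2 := by
  have hmaps : ∀ T ∈ largeConn23 E K, T.card ∈ Icc 1 N := by
    intro T hT
    have hlarge : K < T.card := (mem_filter.mp hT).2.2
    have hT₁ : 1 ≤ T.card := by exact_mod_cast (show (0 : ℝ) < T.card by linarith)
    exact mem_Icc.mpr ⟨hT₁, (card_le_univ T).trans_eq (Fintype.card_fin N)⟩
  calc ∑ T ∈ largeConn23 E K, β ^ T.card
      = ∑ k ∈ Icc 1 N, ∑ T ∈ (largeConn23 E K).filter (·.card = k), β ^ T.card :=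
        (sum_fiberwise_of_maps_to hmaps _).symm
    _ ≤ ∑ _k ∈ Icc 1 N, 1 / (2 * (N : ℝ)) := sum_le_sum fun k hk =>
        sum_largeConn23_card_eq_le hdeg hβ hβρ hρ (mem_Icc.mp hk).1 (mem_Icc.mp hk).2
    _ ≤ 1 / 2 := by
        rw [sum_const, Nat.card_Icc, Nat.add_sub_cancel, nsmul_eq_mul, mul_one_div]
        exact div_le_of_le_mul₀ (by positivity) (by norm_num) (by linarith)

end Components

/-- For a `δ`-uniform hypergraph with `N` hyperedges, each intersecting at most
`d < 2^{δ/500}` others (`δ` sufficiently large): under a uniform random 2-coloring with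
bias threshold `δ/8`, with probability at least `1/2` every connected 2,3-component of
biased hyperedges has size at most `log(2N)/(c·δ)` for an absolute constant `c > 0`. -/
theorem stmt_6 :
    ∃ c : ℝ, 0 < c ∧ ∃ δ₀ : ℕ, ∀ (δ N d : ℕ), δ₀ ≤ δ →
    ∀ (V : Type) [Fintype V] [DecidableEq V] (E : Fin N → Finset V),
    (∀ i, (E i).card = δ) →
    (∀ i : Fin N, Nat.card {j : Fin N // j ≠ i ∧ ¬ Disjoint (E i) (E j)} ≤ d) →
    ((d : ℝ) < 2 ^ ((δ : ℝ) / 500)) →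
    (1 : ℝ) / 2 ≤
      (((Finset.univ : Finset (V → Bool)).filter fun col =>
          ∀ T : Finset (Fin N), IsConn23 E T → (∀ i ∈ T, Biased18 δ col (E i)) →
            (T.card : ℝ) ≤ Real.logb 2 (2 * N) / (c * δ)).card : ℝ)
        / 2 ^ (Fintype.card V) := by
  refine ⟨1 / 10, by norm_num, 40, fun δ N d hδ V _ _ E hcard hdeg hd => ?_⟩
  set K := Real.logb 2 (2 * N) / (1 / 10 * δ)
  have hδ₀ : (0 : ℝ) < 1 / 10 * δ := mul_pos (by norm_num) (by exact_mod_cast (by omega : 0 < δ))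
  have hK : 0 ≤ K := div_nonneg (div_nonneg (by exact_mod_cast Real.log_natCast_nonneg (2 * N))
    (Real.log_nonneg one_le_two)) hδ₀.le
  have hbad := card_filter_exists_large_biased_le hcard K
  have hsum := sum_largeConn23_pow_card_le_half hdeg (biasBound_nonneg δ)
    (succ_pow_six_mul_biasBound_le hδ hd) hK
    fun k hk => sq_mul_two_rpow_pow_le_one hδ₀ (by positivity) hk
  have hsplit := card_filter_add_card_filter_not (s := (univ : Finset (V → Bool)))
    fun col => ∀ T : Finset (Fin N), IsConn23 E T → (∀ i ∈ T, Biased18 δ col (E i)) →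
      (T.card : ℝ) ≤ K
  rw [card_univ, Fintype.card_fun, Fintype.card_bool] at hsplit hbad
  replace hsplit := congrArg (Nat.cast : ℕ → ℝ) hsplit
  push_cast at hsplit hbad
  rw [le_div_iff₀ (by positivity)]
  nlinarith [mul_le_mul_of_nonneg_right hsum (by positivity : (0 : ℝ) ≤ 2 ^ Fintype.card V)]
end
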